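/- Under the group G = (ℤ/2)⁵ ⋊ D₅ acting on ℂ⁵ (the k-th ℤ/2 factor acting by x_k ↦ −x_k and D₅ permuting coordinates dihedrally), the subspaces U₁ = span{x_j x_{j+1} : j ∈ ℤ/5} and U₂ = span{x_j x_{j+2} : j ∈ ℤ/5} of Sym²(ℂ⁵) are G-invariant and irreducible, and they are not isomorphic as G-representations. -/

import Mathlib

/-- The dihedral group `D₅` inside `Perm (Fin 5)`, generated by the rotation
and the reflection `(x₀ x₃)(x₁ x₂)`. -/
def D5 : Subgroup (Equiv.Perm (Fin 5)) :=
  Subgroup.closure {finRotate 5, Equiv.swap 0 3 * Equiv.swap 1 2}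

/-- The sign-change data of `(ℤ/2)⁵`: vectors of `±1`s. -/
def SignsC : Set (Fin 5 → ℂ) := {ε | ∀ k, ε k = 1 ∨ ε k = -1}

/-- The action of `(ε, π) ∈ (ℤ/2)⁵ ⋊ D₅` on functions on `ℂ⁵` by substitution. -/
def actG (ε : Fin 5 → ℂ) (π : Equiv.Perm (Fin 5)) (f : (Fin 5 → ℂ) → ℂ) :
    (Fin 5 → ℂ) → ℂ :=
  fun x => f (fun k => ε k * x (π k))

/-- `U₁ = span{x_j x_{j+1}}`. -/
noncomputable def U1 : Submodule ℂ ((Fin 5 → ℂ) → ℂ) :=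
  Submodule.span ℂ {f | ∃ j : Fin 5, f = fun x => x j * x (j + 1)}

/-- `U₂ = span{x_j x_{j+2}}`. -/
noncomputable def U2 : Submodule ℂ ((Fin 5 → ℂ) → ℂ) :=
  Submodule.span ℂ {f | ∃ j : Fin 5, f = fun x => x j * x (j + 2)}

/-!
The sign changes act diagonally on the basis `x_j x_{j+d}` of `U_d` (with `d = 1, 2`) through
the characters `ε ↦ ε_j ε_{j+d}`, and flipping `x_j` and then `x_{j+d}` singles out the basis
vector `x_j x_{j+d}`; so a nonzero invariant subspace contains a basis vector, and the rotation
then moves it to all the others. Invariance holds because `D₅` preserves the edges `{j, j+d}` of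
the circulant graph on `ℤ/5`. Flipping `x₀` and `x₂` acts by `-1` on a subspace of dimension
four in `U₁` but only two in `U₂` (the edges crossing the cut `{0, 2}`), so no equivariant
injection `U₁ → U₂` exists.
-/

open Submodule

def relAut {α : Type*} (r : α → α → Prop) : Subgroup (Equiv.Perm α) where
  carrier := {π | ∀ a b, r (π a) (π b) ↔ r a b}
  one_mem' _ _ := Iff.rfl
  mul_mem' hπ hσ a b := (hπ _ _).trans (hσ a b)
  inv_mem' {π} hπ a b := by
    simpa only [Equiv.Perm.coe_inv, Equiv.apply_symm_apply] using (hπ (π⁻¹ a) (π⁻¹ b)).symm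

def IsEdge (d a b : Fin 5) : Prop := b = a + d ∨ a = b + d

instance (d a b : Fin 5) : Decidable (IsEdge d a b) := by unfold IsEdge; infer_instance

theorem D5_le_relAut_isEdge (d : Fin 5) : D5 ≤ relAut (IsEdge d) := by
  rw [D5, Subgroup.closure_le, Set.insert_subset_iff, Set.singleton_subset_iff]
  refine ⟨fun a b => ?_, fun a b => ?_⟩ <;> revert d a b <;> decide

local notation "V" => (Fin 5 → ℂ) → ℂ

def edgeMonomial (d j : Fin 5) : V := fun x => x j * x (j + d)

noncomputable def edgeSpan (d : Fin 5) : Submodule ℂ V :=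
  span ℂ (Set.range (edgeMonomial d))

theorem U1_eq : U1 = edgeSpan 1 := by
  simp only [U1, edgeSpan, Set.range, eq_comm]; rfl

theorem U2_eq : U2 = edgeSpan 2 := by
  simp only [U2, edgeSpan, Set.range, eq_comm]; rfl

def actLin (ε : Fin 5 → ℂ) (π : Equiv.Perm (Fin 5)) : V →ₗ[ℂ] V where
  toFun := actG ε π
  map_add' _ _ := rfl
  map_smul' _ _ := rfl

theorem actLin_apply (ε : Fin 5 → ℂ) (π : Equiv.Perm (Fin 5)) (f : V) :
    actLin ε π f = actG ε π f := rfl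

theorem exists_actG_edgeMonomial_eq_smul {d : Fin 5} {π : Equiv.Perm (Fin 5)}
    (hπ : π ∈ relAut (IsEdge d)) (ε : Fin 5 → ℂ) (j : Fin 5) :
    ∃ j', actG ε π (edgeMonomial d j) = (ε j * ε (j + d)) • edgeMonomial d j' := by
  rcases (hπ j (j + d)).2 (Or.inl rfl) with h | h
  · refine ⟨π j, funext fun x => ?_⟩
    simp only [actG, edgeMonomial, h, Pi.smul_apply, smul_eq_mul]
    ring
  · refine ⟨π (j + d), funext fun x => ?_⟩
    simp only [actG, edgeMonomial, h, Pi.smul_apply, smul_eq_mul]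
    ring

theorem actG_mem_edgeSpan {d : Fin 5} {π : Equiv.Perm (Fin 5)} (hπ : π ∈ relAut (IsEdge d))
    (ε : Fin 5 → ℂ) {f : V} (hf : f ∈ edgeSpan d) : actG ε π f ∈ edgeSpan d := by
  suffices edgeSpan d ≤ (edgeSpan d).comap (actLin ε π) from this hf
  rw [edgeSpan, span_le]
  rintro _ ⟨j, rfl⟩
  obtain ⟨j', hj'⟩ := exists_actG_edgeMonomial_eq_smul hπ ε j
  rw [SetLike.mem_coe, mem_comap, actLin_apply, hj']
  exact smul_mem _ _ (subset_span ⟨j', rfl⟩)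

def edgePoint (d j : Fin 5) : Fin 5 → ℂ := fun k => if k = j ∨ k = j + d then 1 else 0

theorem edgeMonomial_apply_edgePoint {d : Fin 5} (hd : d ≠ 0) (i j : Fin 5) :
    edgeMonomial d i (edgePoint d j) = if i = j then 1 else 0 := by
  have key : ∀ d i j : Fin 5, d ≠ 0 →
      ((i = j ∨ i = j + d) ∧ (i + d = j ∨ i + d = j + d) ↔ i = j) := by decide
  have := key d i j hd
  simp only [edgeMonomial, edgePoint, mul_ite, mul_one, mul_zero]
  split_ifs <;> tauto

theorem eq_sum_edgePoint_smul {d : Fin 5} (hd : d ≠ 0) {f : V} (hf : f ∈ edgeSpan d) :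
    f = ∑ j, f (edgePoint d j) • edgeMonomial d j := by
  let coeffSum : V →ₗ[ℂ] V := ∑ j, (LinearMap.proj (edgePoint d j)).smulRight (edgeMonomial d j)
  refine LinearMap.eqOn_span (f := LinearMap.id) (g := coeffSum) ?_ hf
  rintro _ ⟨i, rfl⟩
  simp [coeffSum, edgeMonomial_apply_edgePoint hd]

theorem linearIndependent_edgeMonomial {d : Fin 5} (hd : d ≠ 0) :
    LinearIndependent ℂ (edgeMonomial d) := by
  rw [Fintype.linearIndependent_iff]
  intro c hc j
  simpa [edgeMonomial_apply_edgePoint hd] using congrFun hc (edgePoint d j)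

theorem actG_one_edgeMonomial (ε : Fin 5 → ℂ) (d i : Fin 5) :
    actG ε 1 (edgeMonomial d i) = (ε i * ε (i + d)) • edgeMonomial d i := by
  funext x
  simp only [actG, edgeMonomial, Equiv.Perm.coe_one, id_eq, Pi.smul_apply, smul_eq_mul]
  ring

theorem actG_one_apply_edgePoint {d : Fin 5} (hd : d ≠ 0) (ε : Fin 5 → ℂ) (j : Fin 5) {f : V}
    (hf : f ∈ edgeSpan d) :
    actG ε 1 f (edgePoint d j) = ε j * ε (j + d) * f (edgePoint d j) := by
  refine LinearMap.eqOn_span (f := LinearMap.proj (edgePoint d j) ∘ₗ actLin ε 1)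
    (g := (ε j * ε (j + d)) • LinearMap.proj (edgePoint d j)) ?_ hf
  rintro _ ⟨i, rfl⟩
  simp only [LinearMap.comp_apply, LinearMap.smul_apply, LinearMap.proj_apply, actLin_apply,
    actG_one_edgeMonomial, Pi.smul_apply, smul_eq_mul, edgeMonomial_apply_edgePoint hd]
  split_ifs with h
  · rw [h]
  · simp

def signChange (s : Finset (Fin 5)) : Fin 5 → ℂ := fun k => if k ∈ s then -1 else 1

theorem signChange_mem_signsC (s : Finset (Fin 5)) : signChange s ∈ SignsC := fun k => by
  by_cases h : k ∈ s <;> simp [signChange, h]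

def cut (s : Finset (Fin 5)) (d : Fin 5) : Finset (Fin 5) := {i | ¬(i ∈ s ↔ i + d ∈ s)}

theorem signChange_mul_signChange (s : Finset (Fin 5)) (d i : Fin 5) :
    signChange s i * signChange s (i + d) = if i ∈ cut s d then -1 else 1 := by
  by_cases hi : i ∈ s <;> by_cases hid : i + d ∈ s <;> simp [signChange, cut, hi, hid]

theorem actG_signChange_edgeMonomial (s : Finset (Fin 5)) (d i : Fin 5) :
    actG (signChange s) 1 (edgeMonomial d i) =
      (if i ∈ cut s d then -1 else 1 : ℂ) • edgeMonomial d i := by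
  rw [actG_one_edgeMonomial, signChange_mul_signChange]

-- `x_j x_{j+d}` is the only monomial of `U_d` that is odd under both flips.
theorem isolate_edgeMonomial {d : Fin 5} (hd : d ≠ 0) (j : Fin 5) {f : V}
    (hf : f ∈ edgeSpan d) :
    ((1 - actLin (signChange {j}) 1) ∘ₗ (1 - actLin (signChange {j + d}) 1)) f =
      (4 * f (edgePoint d j)) • edgeMonomial d j := by
  have hcut : ∀ d i j : Fin 5, d ≠ 0 → (i ∈ cut {j} d ∧ i ∈ cut {j + d} d ↔ i = j) := by
    simp only [cut, Finset.mem_filter, Finset.mem_univ, true_and, Finset.mem_singleton]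
    decide
  refine (LinearMap.eqOn_span (g := (4 : ℂ) • (LinearMap.proj (edgePoint d j)).smulRight
    (edgeMonomial d j)) ?_ hf).trans (smul_smul (4 : ℂ) (f (edgePoint d j)) _)
  rintro _ ⟨i, rfl⟩
  have := hcut d i j hd
  simp only [LinearMap.comp_apply, LinearMap.sub_apply, Module.End.one_apply, actLin_apply,
    actG_signChange_edgeMonomial, LinearMap.smul_apply, LinearMap.smulRight_apply,
    LinearMap.proj_apply, edgeMonomial_apply_edgePoint hd, map_sub, map_smul]
  rcases eq_or_ne i j with rfl | hij
  · rw [if_pos (this.2 rfl).1, if_pos (this.2 rfl).2, if_pos rfl]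
    module
  · rw [if_neg hij]
    split_ifs <;> first | tauto | module

theorem actG_finRotate_edgeMonomial (d i : Fin 5) :
    actG 1 (finRotate 5) (edgeMonomial d i) = edgeMonomial d (i + 1) := by
  funext x
  simp only [actG, edgeMonomial, finRotate_apply, Pi.one_apply, one_mul, add_right_comm]

theorem edgeSpan_le_of_edgeMonomial_mem {d : Fin 5} {W : Submodule ℂ V}
    (hrot : ∀ f ∈ W, actG 1 (finRotate 5) f ∈ W) {j : Fin 5} (hj : edgeMonomial d j ∈ W) :
    edgeSpan d ≤ W := by
  have hshift : ∀ k : Fin 5, edgeMonomial d (j + k) ∈ W := by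
    intro k
    induction k using Fin.induction with
    | zero => simpa using hj
    | succ k ih =>
      rw [← Fin.coeSucc_eq_succ, ← add_assoc, ← actG_finRotate_edgeMonomial]
      exact hrot _ ih
  rw [edgeSpan, span_le]
  rintro _ ⟨i, rfl⟩
  simpa using hshift (i - j)

theorem eq_bot_or_eq_edgeSpan {d : Fin 5} (hd : d ≠ 0) {W : Submodule ℂ V}
    (hle : W ≤ edgeSpan d)
    (hsign : ∀ s, ∀ f ∈ W, actG (signChange s) 1 f ∈ W)
    (hrot : ∀ f ∈ W, actG 1 (finRotate 5) f ∈ W) :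
    W = ⊥ ∨ W = edgeSpan d := by
  refine or_iff_not_imp_left.2 fun hW => le_antisymm hle ?_
  obtain ⟨f, hfW, hf0⟩ := W.ne_bot_iff.1 hW
  obtain ⟨j, hj⟩ : ∃ j, f (edgePoint d j) ≠ 0 := by
    by_contra! h
    apply hf0
    rw [eq_sum_edgePoint_smul hd (hle hfW)]
    simp [h]
  have hflip : ∀ s, ∀ g ∈ W, (1 - actLin (signChange s) 1) g ∈ W := fun s g hg =>
    W.sub_mem hg (hsign s g hg)
  have hisol := hflip {j} _ (hflip {j + d} f hfW)
  rw [← LinearMap.comp_apply, isolate_edgeMonomial hd j (hle hfW)] at hisol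
  refine edgeSpan_le_of_edgeMonomial_mem hrot (j := j) ?_
  exact (W.smul_mem_iff (mul_ne_zero (by norm_num) hj)).1 hisol

theorem mem_span_cut_of_actG_signChange_eq_neg {d : Fin 5} (hd : d ≠ 0) (s : Finset (Fin 5))
    {g : V} (hg : g ∈ edgeSpan d) (hneg : actG (signChange s) 1 g = -g) :
    g ∈ span ℂ (Set.range fun i : cut s d => edgeMonomial d i) := by
  rw [eq_sum_edgePoint_smul hd hg]
  refine sum_mem fun i _ => ?_
  by_cases hi : i ∈ cut s d
  · exact smul_mem _ _ (subset_span ⟨⟨i, hi⟩, rfl⟩)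
  · have hcoeff := actG_one_apply_edgePoint hd (signChange s) i hg
    rw [hneg, signChange_mul_signChange, if_neg hi, Pi.neg_apply, one_mul] at hcoeff
    rw [CharZero.eq_neg_self_iff.1 hcoeff.symm, zero_smul]
    exact zero_mem _

theorem not_injOn_of_card_cut_lt {d d' : Fin 5} (hd : d ≠ 0) (hd' : d' ≠ 0) {s : Finset (Fin 5)}
    (hcard : (cut s d').card < (cut s d).card) (T : V →ₗ[ℂ] V)
    (hmaps : ∀ f ∈ edgeSpan d, T f ∈ edgeSpan d')
    (hcomm : ∀ f ∈ edgeSpan d, T (actG (signChange s) 1 f) = actG (signChange s) 1 (T f)) :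
    ¬ Set.InjOn T (edgeSpan d) := by
  intro hinj
  have hmem : ∀ i, edgeMonomial d i ∈ edgeSpan d := fun i => subset_span ⟨i, rfl⟩
  have hli : LinearIndependent ℂ (T ∘ fun i : cut s d => edgeMonomial d i) := by
    refine ((linearIndependent_edgeMonomial hd).comp _ Subtype.val_injective).map ?_
    refine disjoint_def.2 fun f hf hTf => hinj (span_le.2 ?_ hf) (zero_mem _) ?_
    · rintro _ ⟨i, rfl⟩
      exact hmem i
    · rw [LinearMap.mem_ker.1 hTf, map_zero]
  have hle : span ℂ (Set.range (T ∘ fun i : cut s d => edgeMonomial d i)) ≤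
      span ℂ (Set.range fun i : cut s d' => edgeMonomial d' i) := by
    refine span_le.2 ?_
    rintro _ ⟨⟨i, hi⟩, rfl⟩
    refine mem_span_cut_of_actG_signChange_eq_neg hd' s (hmaps _ (hmem i)) ?_
    rw [Function.comp_apply, ← hcomm _ (hmem i), actG_signChange_edgeMonomial, if_pos hi,
      neg_one_smul, map_neg]
  have := Module.Finite.span_of_finite ℂ (Set.finite_range fun i : cut s d' => edgeMonomial d' i)
  have hdim := (finrank_span_eq_card hli).symm.trans_le
    ((Submodule.finrank_mono hle).trans (finrank_range_le_card _))
  simp only [Fintype.card_coe] at hdim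
  omega

/-- Under `G = (ℤ/2)⁵ ⋊ D₅` acting on `ℂ⁵` by sign changes and dihedral
coordinate permutations, the subspaces `U₁ = span{x_j x_{j+1}}` and
`U₂ = span{x_j x_{j+2}}` of `Sym²(ℂ⁵)` are `G`-invariant and irreducible and
are not isomorphic as `G`-representations. -/
theorem stmt_17 :
    -- invariance
    (∀ ε ∈ SignsC, ∀ π ∈ D5, ∀ f ∈ U1, actG ε π f ∈ U1) ∧
    (∀ ε ∈ SignsC, ∀ π ∈ D5, ∀ f ∈ U2, actG ε π f ∈ U2) ∧
    -- irreducibility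
    (∀ W : Submodule ℂ ((Fin 5 → ℂ) → ℂ), W ≤ U1 →
      (∀ ε ∈ SignsC, ∀ π ∈ D5, ∀ f ∈ W, actG ε π f ∈ W) → W = ⊥ ∨ W = U1) ∧
    (∀ W : Submodule ℂ ((Fin 5 → ℂ) → ℂ), W ≤ U2 →
      (∀ ε ∈ SignsC, ∀ π ∈ D5, ∀ f ∈ W, actG ε π f ∈ W) → W = ⊥ ∨ W = U2) ∧
    -- non-isomorphism: no equivariant linear isomorphism U₁ → U₂
    ¬ ∃ T : ((Fin 5 → ℂ) → ℂ) →ₗ[ℂ] ((Fin 5 → ℂ) → ℂ),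
        Submodule.map T U1 = U2 ∧
        (∀ f ∈ U1, ∀ g ∈ U1, T f = T g → f = g) ∧
        (∀ ε ∈ SignsC, ∀ π ∈ D5, ∀ f ∈ U1, T (actG ε π f) = actG ε π (T f)) := by
  have irreducible (d : Fin 5) (hd : d ≠ 0) (W : Submodule ℂ V) (hle : W ≤ edgeSpan d)
      (hinv : ∀ ε ∈ SignsC, ∀ π ∈ D5, ∀ f ∈ W, actG ε π f ∈ W) : W = ⊥ ∨ W = edgeSpan d :=
    eq_bot_or_eq_edgeSpan hd hle (fun s => hinv _ (signChange_mem_signsC s) 1 (one_mem _))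
      (hinv 1 (fun _ => Or.inl rfl) _ (Subgroup.subset_closure (Set.mem_insert _ _)))
  rw [U1_eq, U2_eq]
  refine ⟨fun ε _ π hπ _ => actG_mem_edgeSpan (D5_le_relAut_isEdge 1 hπ) ε,
    fun ε _ π hπ _ => actG_mem_edgeSpan (D5_le_relAut_isEdge 2 hπ) ε,
    irreducible 1 (by decide), irreducible 2 (by decide), ?_⟩
  rintro ⟨T, hmap, hinj, hcomm⟩
  refine not_injOn_of_card_cut_lt (s := {0, 2}) (by decide) (by decide) (by decide) T
    (fun f hf => hmap ▸ mem_map_of_mem hf)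
    (fun f => hcomm _ (signChange_mem_signsC _) 1 (one_mem _) f) fun f hf g hg => hinj f hf g hg
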